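/- For every μ ∈ Δ(X) and every v ∈ 𝒱(μ), there exists P ∈ Δ²(X) with barycenter E_P[ν] = μ and support of size at most (n+1)·|X| such that v = (E_P[V^1], …, E_P[V^n]). -/

import Mathlib

open MeasureTheory Topology Filter Module

noncomputable section

def padW {k m : ℕ} (w : Fin k → ℝ) : Fin m → ℝ :=
  fun j => if h : (j : ℕ) < k then w ⟨j, h⟩ else 0

def padZ {α : Type*} {k m : ℕ} (z : Fin k → α) (a₀ : α) : Fin m → α :=
  fun j => if h : (j : ℕ) < k then z ⟨j, h⟩ else a₀

lemma pad_sum {α : Type*} {M : Type*} [AddCommMonoid M] {k m : ℕ} (hkm : k ≤ m)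
    (w : Fin k → ℝ) (z : Fin k → α) (a₀ : α) (g : ℝ → α → M) (hg : ∀ a, g 0 a = 0) :
    ∑ j : Fin m, g (padW w j) (padZ z a₀ j) = ∑ i : Fin k, g (w i) (z i) := by
  set F : ℕ → M := fun i => if h : i < k then g (w ⟨i, h⟩) (z ⟨i, h⟩) else 0 with hF
  have h1 : ∀ j : Fin m, g (padW w j) (padZ z a₀ j) = F j := by
    intro j
    by_cases h : (j : ℕ) < k <;> simp [padW, padZ, hF, h, hg]
  have h2 : ∀ i : Fin k, g (w i) (z i) = F i := by
    intro i
    simp [hF, i.isLt]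
  calc ∑ j : Fin m, g (padW w j) (padZ z a₀ j) = ∑ j : Fin m, F j := by
        exact Finset.sum_congr rfl fun j _ => h1 j
    _ = ∑ j ∈ Finset.range m, F j := Fin.sum_univ_eq_sum_range F m
    _ = ∑ j ∈ Finset.range k, F j := by
        refine (Finset.sum_subset (Finset.range_subset_range.2 hkm) ?_).symm
        intro i _ hi
        simp only [Finset.mem_range, not_lt] at hi
        simp [hF, Nat.not_lt.2 hi]
    _ = ∑ i : Fin k, F i := (Fin.sum_univ_eq_sum_range F k).symm
    _ = ∑ i : Fin k, g (w i) (z i) := Finset.sum_congr rfl fun i _ => (h2 i).symm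

lemma card_le_of_affineIndependent_mem {E : Type*} [NormedAddCommGroup E] [NormedSpace ℝ E]
    [FiniteDimensional ℝ E] {ι : Type*} [Fintype ι] {z : ι → E}
    (hz : AffineIndependent ℝ z) (S : Submodule ℝ E) (hS : ∀ i j, z i - z j ∈ S) :
    Fintype.card ι ≤ finrank ℝ S + 1 := by
  cases isEmpty_or_nonempty ι with
  | inl h => simp [Fintype.card_eq_zero]
  | inr h =>
    classical
    obtain ⟨i₀⟩ := h
    haveI : Nonempty ι := ⟨i₀⟩
    have h1 := (affineIndependent_iff_linearIndependent_vsub ℝ z i₀).mp hz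
    let g : {i // i ≠ i₀} → S := fun i => ⟨z i - z i₀, hS _ _⟩
    have hli : LinearIndependent ℝ g := by
      apply LinearIndependent.of_comp S.subtype
      exact h1
    have hc := hli.fintype_card_le_finrank
    have hcard : Fintype.card {i // i ≠ i₀} = Fintype.card ι - 1 := by
      simp [Ne, Fintype.card_subtype_compl, Fintype.card_subtype_eq]
    have hpos : 1 ≤ Fintype.card ι := Fintype.card_pos
    omega

lemma isCompact_convexHull_of_isCompact {E : Type*} [NormedAddCommGroup E] [NormedSpace ℝ E]
    [FiniteDimensional ℝ E] {K : Set E} (hK : IsCompact K) : IsCompact (convexHull ℝ K) := by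
  rcases K.eq_empty_or_nonempty with h | ⟨a₀, ha₀⟩
  · simp [h]
  · set d := finrank ℝ E + 1 with hd
    set T : Set ((Fin d → ℝ) × (Fin d → E)) :=
      stdSimplex ℝ (Fin d) ×ˢ Set.univ.pi (fun _ => K) with hT
    have hTc : IsCompact T := (isCompact_stdSimplex ℝ (Fin d)).prod (isCompact_univ_pi fun _ => hK)
    set f : (Fin d → ℝ) × (Fin d → E) → E := fun q => ∑ i, q.1 i • q.2 i with hf
    have hfc : Continuous f := by
      apply continuous_finset_sum
      intro i _
      exact ((continuous_apply i).comp continuous_fst).smul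
        ((continuous_apply i).comp continuous_snd)
    suffices hsuf : f '' T = convexHull ℝ K by
      rw [← hsuf]; exact hTc.image hfc
    apply Set.Subset.antisymm
    · rintro _ ⟨⟨w, z⟩, ⟨hw, hz⟩, rfl⟩
      exact mem_convexHull_of_exists_fintype w z hw.1 hw.2 (fun i => hz i trivial) rfl
    · intro x hx
      obtain ⟨ι, hfin, z, w, hzr, hai, hwpos, hw1, hsum⟩ :=
        eq_pos_convex_span_of_mem_convexHull hx
      letI := hfin
      have hcard : Fintype.card ι ≤ d := by
        have := card_le_of_affineIndependent_mem hai ⊤ (fun i j => trivial)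
        simpa [finrank_top] using this
      set k := Fintype.card ι with hk
      let e : Fin k ≃ ι := (Fintype.equivFin ι).symm
      refine ⟨(padW (w ∘ e), padZ (z ∘ e) a₀), ⟨⟨?_, ?_⟩, ?_⟩, ?_⟩
      · intro j
        by_cases h : (j : ℕ) < k <;> simp [padW, h, (hwpos _).le]
      · rw [pad_sum (M := ℝ) hcard (w ∘ e) (z ∘ e) a₀ (fun r _ => r) (fun _ => rfl)]
        rw [← hw1]
        exact Equiv.sum_comp e w
      · intro j _
        by_cases h : (j : ℕ) < k
        · simpa [padZ, h] using hzr ⟨_, rfl⟩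
        · simpa [padZ, h] using ha₀
      · show ∑ i, _ • _ = x
        rw [pad_sum hcard (w ∘ e) (z ∘ e) a₀ (fun r a => r • a) (fun a => zero_smul ℝ a)]
        rw [← hsum]
        exact Equiv.sum_comp e (fun i => w i • z i)

section MeasureLemmas

variable {X : Type*} [Fintype X]

lemma integrable_dirac' {f : stdSimplex ℝ X → ℝ} (hf : Continuous f) (a : stdSimplex ℝ X) :
    Integrable f (Measure.dirac a) := by
  refine ⟨hf.aestronglyMeasurable, ?_⟩
  simp only [HasFiniteIntegral]
  rw [lintegral_dirac]
  exact ENNReal.coe_lt_top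

lemma integral_padded_measure {m : ℕ} (p : Fin m → ℝ) (ν : Fin m → stdSimplex ℝ X)
    (hp : ∀ j, 0 ≤ p j) {f : stdSimplex ℝ X → ℝ} (hf : Continuous f) :
    ∫ x, f x ∂(∑ j, ENNReal.ofReal (p j) • Measure.dirac (ν j)) = ∑ j, p j * f (ν j) := by
  rw [integral_finset_sum_measure (fun j _ =>
    ((integrable_dirac' hf (ν j)).smul_measure ENNReal.ofReal_ne_top))]
  refine Finset.sum_congr rfl fun j _ => ?_
  rw [integral_smul_measure, integral_dirac, ENNReal.toReal_ofReal (hp j), smul_eq_mul]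

lemma isProbability_padded_measure {m : ℕ} (p : Fin m → ℝ) (ν : Fin m → stdSimplex ℝ X)
    (hp : ∀ j, 0 ≤ p j) (hp1 : ∑ j, p j = 1) :
    IsProbabilityMeasure (∑ j, ENNReal.ofReal (p j) • Measure.dirac (ν j)) := by
  constructor
  rw [Measure.finset_sum_apply]
  simp only [Measure.smul_apply, Measure.dirac_apply' _ MeasurableSet.univ, Set.mem_univ,
    Set.indicator_of_mem, smul_eq_mul, mul_one, Pi.one_apply]
  rw [← ENNReal.ofReal_sum_of_nonneg (fun j _ => hp j), hp1, ENNReal.ofReal_one]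

end MeasureLemmas


/-- Expected value `E_P[W] = ∫ W(ν) dP(ν)` of a function `W : Δ(X) → ℝ`
under a Borel probability measure `P ∈ Δ²(X)` on the simplex `Δ(X)`. -/
def expct {X : Type*} [Fintype X] (P : ProbabilityMeasure (stdSimplex ℝ X))
    (W : stdSimplex ℝ X → ℝ) : ℝ :=
  ∫ ν, W ν ∂(P : Measure (stdSimplex ℝ X))

/-- `P ∈ Δ²(X)` has barycenter `E_P[ν] = μ`. -/
def isBary {X : Type*} [Fintype X] (P : ProbabilityMeasure (stdSimplex ℝ X))
    (μ : stdSimplex ℝ X) : Prop :=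
  ∀ x : X, expct P (fun ν => (ν : X → ℝ) x) = (μ : X → ℝ) x

/-- `P ∈ Δ²(X)` has support of size at most `m`: it is a convex combination of at
most `m` Dirac measures on `Δ(X)`. -/
def finSupp {X : Type*} [Fintype X] (P : ProbabilityMeasure (stdSimplex ℝ X)) (m : ℕ) : Prop :=
  ∃ (p : Fin m → ℝ) (ν : Fin m → stdSimplex ℝ X),
    (∀ j, 0 ≤ p j) ∧ (∑ j, p j = 1) ∧
    (P : Measure (stdSimplex ℝ X)) = ∑ j, ENNReal.ofReal (p j) • Measure.dirac (ν j)

/-- The information possibility set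
`𝒱(μ) = {(E_P[V^1], …, E_P[V^n]) : P ∈ Δ²(X), E_P[ν] = μ} ⊆ ℝ^n`. -/
def VSet {X : Type*} [Fintype X] {n : ℕ} (V : Fin n → stdSimplex ℝ X → ℝ)
    (μ : stdSimplex ℝ X) : Set (Fin n → ℝ) :=
  {v | ∃ P : ProbabilityMeasure (stdSimplex ℝ X), isBary P μ ∧ ∀ i, expct P (V i) = v i}

/-- every `v ∈ 𝒱(μ)` is implemented by some `P ∈ Δ²(X)` with barycenter `μ`
and support of size at most `(n+1)·|X|`. -/
theorem statement_6 {X : Type*} [Fintype X] [Nonempty X] {n : ℕ}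
    (V : Fin n → stdSimplex ℝ X → ℝ) (hV : ∀ i, Continuous (V i))
    (μ : stdSimplex ℝ X) (v : Fin n → ℝ) (hv : v ∈ VSet V μ) :
    ∃ P : ProbabilityMeasure (stdSimplex ℝ X),
      isBary P μ ∧ finSupp P ((n + 1) * Fintype.card X) ∧ ∀ i, expct P (V i) = v i := by
  classical
  obtain ⟨P, hbary, hexp⟩ := hv
  haveI : CompactSpace (stdSimplex ℝ X) :=
    isCompact_iff_compactSpace.mp (isCompact_stdSimplex ℝ X)
  set φ : stdSimplex ℝ X → ((X → ℝ) × (Fin n → ℝ)) := fun ν => ((ν : X → ℝ), fun i => V i ν) with hφdef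
  have hφ : Continuous φ := by
    refine Continuous.prodMk continuous_subtype_val (continuous_pi fun i => hV i)
  have hφint : Integrable φ (P : Measure (stdSimplex ℝ X)) := by
    apply hφ.integrable_of_hasCompactSupport
    exact IsCompact.of_isClosed_subset isCompact_univ (isClosed_tsupport φ) (Set.subset_univ _)
  set b : ((X → ℝ) × (Fin n → ℝ)) := ∫ ν, φ ν ∂(P : Measure (stdSimplex ℝ X)) with hb
  -- coordinates of b
  have hb1 : ∀ x : X, b.1 x = (μ : X → ℝ) x := by
    intro x
    set L : ((X → ℝ) × (Fin n → ℝ)) →L[ℝ] ℝ :=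
      (ContinuousLinearMap.proj x).comp (ContinuousLinearMap.fst ℝ (X → ℝ) (Fin n → ℝ)) with hL
    have key : (∫ ν, L (φ ν) ∂(P : Measure (stdSimplex ℝ X))) = L b :=
      L.integral_comp_comm hφint
    have h2 : b.1 x = ∫ ν, ((ν : X → ℝ) x) ∂(P : Measure (stdSimplex ℝ X)) := key.symm
    rw [h2]
    exact hbary x
  have hb2 : ∀ i : Fin n, b.2 i = v i := by
    intro i
    set L : ((X → ℝ) × (Fin n → ℝ)) →L[ℝ] ℝ :=
      (ContinuousLinearMap.proj i).comp (ContinuousLinearMap.snd ℝ (X → ℝ) (Fin n → ℝ)) with hL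
    have key : (∫ ν, L (φ ν) ∂(P : Measure (stdSimplex ℝ X))) = L b :=
      L.integral_comp_comm hφint
    have h2 : b.2 i = ∫ ν, V i ν ∂(P : Measure (stdSimplex ℝ X)) := key.symm
    rw [h2]
    exact hexp i
  -- b lies in the convex hull of the range of φ
  have hbK : b ∈ convexHull ℝ (Set.range φ) := by
    have hK : IsCompact (Set.range φ) := isCompact_range hφ
    have hcc : IsCompact (convexHull ℝ (Set.range φ)) := isCompact_convexHull_of_isCompact hK
    exact (convex_convexHull ℝ _).integral_mem hcc.isClosed
      (Eventually.of_forall fun ν => subset_convexHull ℝ _ ⟨ν, rfl⟩) hφint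
  obtain ⟨ι, hfin, z, w, hzr, hai, hwpos, hw1, hsum⟩ :=
    eq_pos_convex_span_of_mem_convexHull hbK
  letI := hfin
  -- the linear functional p ↦ ∑ x, p.1 x
  set L : ((X → ℝ) × (Fin n → ℝ)) →ₗ[ℝ] ℝ :=
    { toFun := fun p => ∑ x, p.1 x
      map_add' := by intros; simp [Prod.fst_add, Finset.sum_add_distrib]
      map_smul' := by intros; simp [Prod.smul_fst, Finset.mul_sum] } with hLdef
  have hLφ : ∀ ν : stdSimplex ℝ X, L (φ ν) = 1 := fun ν => ν.2.2
  have hker : ∀ i j : ι, z i - z j ∈ LinearMap.ker L := by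
    intro i j
    obtain ⟨νi, hνi⟩ := hzr ⟨i, rfl⟩
    obtain ⟨νj, hνj⟩ := hzr ⟨j, rfl⟩
    simp only [LinearMap.mem_ker, map_sub, ← hνi, ← hνj, hLφ, sub_self]
  have hcard : Fintype.card ι ≤ finrank ℝ (LinearMap.ker L) + 1 :=
    card_le_of_affineIndependent_mem hai _ hker
  have hrank : finrank ℝ (LinearMap.ker L) + 1 ≤ Fintype.card X + n := by
    have hrn := LinearMap.finrank_range_add_finrank_ker L
    have hfE : finrank ℝ ((X → ℝ) × (Fin n → ℝ)) = Fintype.card X + n := by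
      rw [Module.finrank_prod, Module.finrank_pi, Module.finrank_pi, Fintype.card_fin]
    have hr1 : 1 ≤ finrank ℝ (LinearMap.range L) := by
      by_contra hcon
      push_neg at hcon
      interval_cases h : finrank ℝ (LinearMap.range L)
      rw [Submodule.finrank_eq_zero] at h
      have : L (φ μ) ∈ LinearMap.range L := LinearMap.mem_range_self L _
      rw [h, Submodule.mem_bot, hLφ] at this
      exact one_ne_zero this
    omega
  set m := (n + 1) * Fintype.card X with hm
  have hXm : Fintype.card X + n ≤ m := by
    have hx1 : 1 ≤ Fintype.card X := Fintype.card_pos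
    have : n * 1 ≤ n * Fintype.card X := Nat.mul_le_mul_left n hx1
    calc Fintype.card X + n = n * 1 + Fintype.card X := by ring
      _ ≤ n * Fintype.card X + Fintype.card X := by omega
      _ = (n + 1) * Fintype.card X := by ring
  set k := Fintype.card ι with hk
  have hkm : k ≤ m := le_trans hcard (le_trans hrank hXm)
  let e : Fin k ≃ ι := (Fintype.equivFin ι).symm
  -- choose preimages in the simplex
  have hzpre : ∀ i : ι, ∃ ν : stdSimplex ℝ X, φ ν = z i := fun i => hzr ⟨i, rfl⟩
  choose ζ hζ using hzpre
  set p : Fin m → ℝ := padW (w ∘ e) with hp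
  set νs : Fin m → stdSimplex ℝ X := padZ (ζ ∘ e) μ with hνs
  have hp0 : ∀ j, 0 ≤ p j := by
    intro j
    by_cases h : (j : ℕ) < k <;> simp [hp, padW, h, (hwpos _).le]
  have hp1 : ∑ j, p j = 1 := by
    rw [hp]
    have := pad_sum (M := ℝ) (α := stdSimplex ℝ X) hkm (w ∘ e) (ζ ∘ e) μ
      (fun r _ => r) (fun _ => rfl)
    rw [show (∑ j, padW (m := m) (w ∘ e) j) =
      ∑ j : Fin m, (fun r (_ : stdSimplex ℝ X) => r) (padW (w ∘ e) j) (padZ (ζ ∘ e) μ j)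
      from rfl, this, ← hw1]
    exact Equiv.sum_comp e w
  have hφsum : ∑ j, p j • φ (νs j) = b := by
    rw [hp, hνs]
    rw [show (∑ j : Fin m, padW (w ∘ e) j • φ (padZ (ζ ∘ e) μ j)) =
      ∑ j : Fin m, (fun r (a : stdSimplex ℝ X) => r • φ a) (padW (w ∘ e) j) (padZ (ζ ∘ e) μ j)
      from rfl, pad_sum hkm (w ∘ e) (ζ ∘ e) μ (fun r a => r • φ a) (fun a => zero_smul ℝ _)]
    have : ∀ i : Fin k, (w ∘ e) i • φ ((ζ ∘ e) i) = w (e i) • z (e i) := by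
      intro i; simp [hζ]
    rw [Finset.sum_congr rfl fun i _ => this i, ← hsum]
    exact Equiv.sum_comp e (fun i => w i • z i)
  -- build the measure
  set Q : Measure (stdSimplex ℝ X) :=
    ∑ j, ENNReal.ofReal (p j) • Measure.dirac (νs j) with hQ
  haveI hQP : IsProbabilityMeasure Q := isProbability_padded_measure p νs hp0 hp1
  set P' : ProbabilityMeasure (stdSimplex ℝ X) := ⟨Q, hQP⟩ with hP'
  have hQint : ∀ (f : stdSimplex ℝ X → ℝ), Continuous f →
      expct P' f = ∑ j, p j * f (νs j) := by
    intro f hf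
    show ∫ x, f x ∂Q = _
    rw [hQ]
    exact integral_padded_measure p νs hp0 hf
  have hbary' : isBary P' μ := by
    intro x
    have hq := hQint (fun ν : stdSimplex ℝ X => (ν : X → ℝ) x)
      ((continuous_apply x).comp continuous_subtype_val)
    rw [hq]
    have h1 : ∑ j, p j * ((νs j : X → ℝ) x) = (∑ j, p j • φ (νs j)).1 x := by
      rw [Prod.fst_sum, Finset.sum_apply]
      refine Finset.sum_congr rfl fun j _ => ?_
      simp [hφdef]
    rw [h1, hφsum]
    exact hb1 x
  refine ⟨P', hbary', ⟨p, νs, hp0, hp1, rfl⟩, ?_⟩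
  intro i
  rw [hQint _ (hV i)]
  have h2 : ∑ j, p j * V i (νs j) = (∑ j, p j • φ (νs j)).2 i := by
    rw [Prod.snd_sum, Finset.sum_apply]
    refine Finset.sum_congr rfl fun j _ => ?_
    simp [hφdef]
  rw [h2, hφsum]
  exact hb2 i
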